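/- arXiv:0805.2163 — 6 statements merged into one kernel-verified Lean document; each statement's English description precedes it below -/
import Mathlib

section
/- If G is a forest (a graph with no cycles), then the reduced Euler characteristic of the independence complex of G lies in {-1, 0, 1}. -/
open Finset

attribute [local instance] Classical.propDecidable

/-- `s` is an independent set of the graph `G`. -/
def SimpleGraph.IsIndep {V : Type*} (G : SimpleGraph V) (s : Finset V) : Prop :=
  ∀ u ∈ s, ∀ v ∈ s, ¬ G.Adj u v

/-!
Write `I(A) = ∑ (-1)^|s|` over the independent sets `s ⊆ A`, so that the reduced Euler
characteristic is `-I(V)`. Splitting by whether `v ∈ s` gives `I(A) = I(A - v) - I(A - N[v])`.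
Hence `I(A) = 0` if `v` is isolated in `A`, and `I(A) = -I(A - N[u])` if `v` is a leaf with
neighbour `u`, since `v` is isolated in `A - u`. In a forest every nonempty vertex set contains
an isolated vertex or a leaf (an end of a longest path), so by induction `|I(A)| ≤ 1`.
-/

namespace SimpleGraph

variable {V : Type*} {G : SimpleGraph V}

theorem IsAcyclic.exists_forall_adj_eq [Finite V] [Nonempty V] (hG : G.IsAcyclic) :
    ∃ v u, ∀ w, G.Adj v w → w = u := by
  obtain ⟨v, _, p, hp, hmax⟩ := Walk.exists_isPath_forall_isPath_length_le_length G
  refine ⟨v, p.snd, fun w hw => hG.eq_snd_of_adj_start hp hw ?_⟩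
  by_contra hwp
  have := hmax _ _ _ (hp.cons (h := hw.symm) hwp)
  simp at this

theorem IsAcyclic.exists_mem_forall_mem_adj_eq (hG : G.IsAcyclic) {A : Finset V}
    (hA : A.Nonempty) : ∃ v ∈ A, ∃ u ∈ A, ∀ w ∈ A, G.Adj v w → w = u := by
  have : Nonempty (A : Set V) := hA.to_subtype
  obtain ⟨⟨v, hv⟩, ⟨u, hu⟩, hvu⟩ := (hG.induce A).exists_forall_adj_eq
  exact ⟨v, hv, u, hu, fun w hw hadj => congrArg Subtype.val (hvu ⟨w, hw⟩ hadj)⟩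

theorem isIndep_insert {v : V} {t : Finset V} :
    G.IsIndep (insert v t) ↔ G.IsIndep t ∧ ∀ w ∈ t, ¬G.Adj v w := by
  simp only [IsIndep, forall_mem_insert, G.irrefl, not_false_eq_true, true_and]
  constructor
  · rintro ⟨hv, ht⟩
    exact ⟨fun u hu => (ht u hu).2, hv⟩
  · rintro ⟨ht, hv⟩
    exact ⟨hv, fun u hu => ⟨fun h => hv u hu h.symm, ht u hu⟩⟩

noncomputable def alternatingIndepSum (G : SimpleGraph V) (A : Finset V) : ℤ :=
  ∑ s ∈ A.powerset with G.IsIndep s, (-1) ^ #s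

theorem alternatingIndepSum_eq_sub {A : Finset V} {v : V} (hv : v ∈ A) :
    G.alternatingIndepSum A = G.alternatingIndepSum (A.erase v)
      - G.alternatingIndepSum {w ∈ A.erase v | ¬G.Adj v w} := by
  have hpow : {w ∈ A.erase v | ¬G.Adj v w}.powerset
      = {t ∈ (A.erase v).powerset | ∀ w ∈ t, ¬G.Adj v w} := by
    ext t
    simp only [mem_powerset, mem_filter, subset_iff]
    grind
  conv_lhs => rw [alternatingIndepSum, ← insert_erase hv, sum_filter,
    sum_powerset_insert (notMem_erase v A)]
  rw [alternatingIndepSum, alternatingIndepSum, hpow,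
    sum_filter, sum_filter, sum_filter, sub_eq_add_neg, ← sum_neg_distrib]
  congr 1
  refine sum_congr rfl fun t ht => ?_
  rw [mem_powerset] at ht
  rw [card_insert_of_notMem fun h => notMem_erase v A (ht h), isIndep_insert]
  split_ifs <;> simp_all [pow_succ]

theorem alternatingIndepSum_empty : G.alternatingIndepSum ∅ = 1 := by
  rw [alternatingIndepSum, powerset_empty, sum_filter, sum_singleton,
    if_pos (show G.IsIndep ∅ from fun u hu => absurd hu (notMem_empty u)), card_empty, pow_zero]

theorem alternatingIndepSum_eq_zero_of_isolated {A : Finset V} {v : V} (hv : v ∈ A)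
    (hiso : ∀ w ∈ A, ¬G.Adj v w) : G.alternatingIndepSum A = 0 := by
  rw [alternatingIndepSum_eq_sub hv, filter_true_of_mem fun w hw => hiso w (mem_of_mem_erase hw),
    sub_self]

theorem alternatingIndepSum_eq_neg_of_leaf {A : Finset V} {u v : V} (hu : u ∈ A) (hv : v ∈ A)
    (hvu : G.Adj v u) (hleaf : ∀ w ∈ A, G.Adj v w → w = u) :
    G.alternatingIndepSum A = -G.alternatingIndepSum {w ∈ A.erase u | ¬G.Adj u w} := by
  have hv_isolated : ∀ w ∈ A.erase u, ¬G.Adj v w := fun w hw hadj =>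
    (mem_erase.mp hw).1 (hleaf w (mem_of_mem_erase hw) hadj)
  rw [alternatingIndepSum_eq_sub hu,
    alternatingIndepSum_eq_zero_of_isolated (mem_erase.mpr ⟨hvu.ne, hv⟩) hv_isolated, zero_sub]

theorem IsAcyclic.abs_alternatingIndepSum_le_one (hG : G.IsAcyclic) (A : Finset V) :
    |G.alternatingIndepSum A| ≤ 1 := by
  induction A using Finset.strongInduction with
  | H A ih =>
  obtain rfl | hA := A.eq_empty_or_nonempty
  · simp [alternatingIndepSum_empty]
  obtain ⟨v, hv, u, hu, hleaf⟩ := hG.exists_mem_forall_mem_adj_eq hA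
  by_cases hvu : G.Adj v u
  · rw [alternatingIndepSum_eq_neg_of_leaf hu hv hvu hleaf, abs_neg]
    exact ih _ ((filter_subset _ _).trans_ssubset (erase_ssubset hu))
  · rw [alternatingIndepSum_eq_zero_of_isolated hv fun w hw hadj => hvu (hleaf w hw hadj ▸ hadj)]
    simp

end SimpleGraph

/-- If `G` is a forest, the reduced Euler characteristic of its independence complex,
`χ̃ = ∑_i (-1)^(i-1) f_i = -∑_{σ independent} (-1)^{|σ|}`, lies in `{-1, 0, 1}`. -/
theorem reduced_euler_char_indep_complex_forest {V : Type*} [Fintype V]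
    (G : SimpleGraph V) (hG : G.IsAcyclic) :
    (-∑ s ∈ Finset.univ.filter G.IsIndep, (-1 : ℤ) ^ s.card) ∈ ({-1, 0, 1} : Set ℤ) := by
  have h : G.alternatingIndepSum univ = ∑ s ∈ univ.filter G.IsIndep, (-1 : ℤ) ^ s.card := by
    rw [SimpleGraph.alternatingIndepSum, powerset_univ]
  rw [← h]
  rcases Int.abs_le_one_iff.mp (hG.abs_alternatingIndepSum_le_one univ) with h | h | h <;>
    simp [h]
end

section
/- Let G be a graph with two distinct vertices u and v with N(u) ⊆ N(v). Then the number of independent sets of G containing v that contain u equals the number of independent sets of G containing v that do not contain u; consequently Σ_{σ independent in G} (-1)^{|σ|} = Σ_{σ independent in G \ v} (-1)^{|σ|}. -/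
open Finset

attribute [local instance] Classical.propDecidable

/-!
Adding or removing `u` is a bijection between the independent sets containing `v` and `u` and
those containing `v` but not `u`: removing `u` keeps a set independent, and adding `u` to an
independent set containing `v` cannot create an edge, since every neighbour of `u` is a neighbour
of `v`. The bijection changes the size by one, so the independent sets containing `v` contribute
zero to the alternating sum.
-/

namespace Finset

variable {α : Type*}

theorem sum_filter_mem_eq_sum_filter_notMem_insert {M : Type*} [AddCommMonoid M]
    (S : Finset (Finset α)) (u : α) (hS : ∀ s, u ∉ s → (insert u s ∈ S ↔ s ∈ S))
    (f : Finset α → M) :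
    ∑ s ∈ S.filter (u ∈ ·), f s = ∑ s ∈ S.filter (u ∉ ·), f (insert u s) := by
  refine sum_nbij' (fun s => s.erase u) (fun s => insert u s) ?_ ?_ ?_ ?_ ?_
  · intro s hs
    simp only [mem_filter] at hs ⊢
    refine ⟨(hS _ (notMem_erase u s)).1 ?_, notMem_erase u s⟩
    rw [insert_erase hs.2]
    exact hs.1
  · intro s hs
    simp only [mem_filter] at hs ⊢
    exact ⟨(hS s hs.2).2 hs.1, mem_insert_self u s⟩
  · intro s hs
    exact insert_erase (mem_filter.1 hs).2
  · intro s hs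
    exact erase_insert (mem_filter.1 hs).2
  · intro s hs
    rw [insert_erase (mem_filter.1 hs).2]

theorem sum_neg_one_pow_card_eq_zero_of_insert_mem_iff {R : Type*} [Ring R]
    (S : Finset (Finset α)) (u : α) (hS : ∀ s, u ∉ s → (insert u s ∈ S ↔ s ∈ S)) :
    ∑ s ∈ S, (-1 : R) ^ #s = 0 := by
  rw [← sum_filter_add_sum_filter_not S (u ∈ ·),
    sum_filter_mem_eq_sum_filter_notMem_insert S u hS, ← sum_add_distrib]
  refine sum_eq_zero fun s hs => ?_
  rw [card_insert_of_notMem (mem_filter.1 hs).2, pow_succ]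
  simp

end Finset

namespace SimpleGraph.IsIndep

variable {V : Type*} {G : SimpleGraph V}

theorem mono {s t : Finset V} (hst : s ⊆ t) (ht : G.IsIndep t) : G.IsIndep s :=
  fun a ha b hb => ht a (hst ha) b (hst hb)

theorem insert_of_neighborSet_subset {u v : V} (h : G.neighborSet u ⊆ G.neighborSet v)
    {s : Finset V} (hs : G.IsIndep s) (hv : v ∈ s) : G.IsIndep (insert u s) := by
  intro a ha b hb hab
  rcases mem_insert.1 ha with rfl | ha' <;> rcases mem_insert.1 hb with rfl | hb'
  · exact G.loopless.irrefl _ hab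
  · exact hs v hv b hb' (h hab)
  · exact hs v hv a ha' (h hab.symm)
  · exact hs a ha' b hb' hab

theorem insert_mem_iff_of_neighborSet_subset {u v : V} (huv : u ≠ v)
    (h : G.neighborSet u ⊆ G.neighborSet v) {s : Finset V} :
    G.IsIndep (insert u s) ∧ v ∈ insert u s ↔ G.IsIndep s ∧ v ∈ s := by
  rw [mem_insert, or_iff_right huv.symm]
  exact ⟨fun hs => ⟨hs.1.mono (subset_insert u s), hs.2⟩,
    fun hs => ⟨hs.1.insert_of_neighborSet_subset h hs.2, hs.2⟩⟩

end SimpleGraph.IsIndep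

/-- If `u ≠ v` and `N(u) ⊆ N(v)`, then the independent sets of `G` containing `v` and
`u` are equinumerous with those containing `v` but not `u`; consequently
`∑_{σ indep in G} (-1)^{|σ|} = ∑_{σ indep in G \ v} (-1)^{|σ|}`. -/
theorem fold_counting {V : Type*} [Fintype V] (G : SimpleGraph V) (u v : V)
    (huv : u ≠ v) (h : G.neighborSet u ⊆ G.neighborSet v) :
    ((Finset.univ.filter (fun s => G.IsIndep s ∧ v ∈ s ∧ u ∈ s)).card
        = (Finset.univ.filter (fun s => G.IsIndep s ∧ v ∈ s ∧ u ∉ s)).card)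
      ∧ ∑ s ∈ Finset.univ.filter G.IsIndep, (-1 : ℤ) ^ s.card
          = ∑ s ∈ Finset.univ.filter (fun s => G.IsIndep s ∧ v ∉ s), (-1 : ℤ) ^ s.card := by
  have hS : ∀ s, u ∉ s → (insert u s ∈ univ.filter (fun s => G.IsIndep s ∧ v ∈ s) ↔
      s ∈ univ.filter (fun s => G.IsIndep s ∧ v ∈ s)) := fun s _ => by
    simpa only [mem_filter, mem_univ, true_and] using
      SimpleGraph.IsIndep.insert_mem_iff_of_neighborSet_subset huv h
  constructor
  · have := sum_filter_mem_eq_sum_filter_notMem_insert _ u hS (fun _ => 1)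
    simp only [filter_filter, and_assoc, sum_const, smul_eq_mul, mul_one] at this
    exact this
  · rw [← sum_filter_add_sum_filter_not (univ.filter G.IsIndep) (v ∈ ·), filter_filter,
      filter_filter, sum_neg_one_pow_card_eq_zero_of_insert_mem_iff _ u hS, zero_add]
end

section
/- For the cycle C_m, the alternating sum Σ_σ (-1)^{|σ|} over independent sets σ of C_m equals 2·(-1)^n if m = 3n, and equals (-1)^{⌈m/3⌉}·(±1) otherwise; in particular its absolute value is 2 when 3 | m and 1 otherwise. -/
open Finset

attribute [local instance] Classical.propDecidable

/-!
Encode a subset of `Fin m` by its set of values in `ℕ`: the independent sets of `C_m` become the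
sets with no two consecutive elements that do not contain both `0` and `m - 1`. For a path on
`n` vertices, splitting on whether the last vertex is in the set (if it is, its neighbour is not)
gives `P (n + 2) = P (n + 1) - P n`, so `P` runs through `1, 0, -1, -1, 0, 1, …` and changes sign
with period 3. The same splitting on the last vertex of the cycle gives
`C (k + 3) = P (k + 2) - P k`, and the values `-2, -1, 1` for `k = 0, 1, 2` then propagate with
the sign `(-1)^j` to `k = 3 j + r`.
-/

def NoConsecutive (s : Finset ℕ) : Prop := ∀ i ∈ s, i + 1 ∉ s

noncomputable def altIndepSum (S : Finset ℕ) : ℤ :=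
  ∑ s ∈ S.powerset with NoConsecutive s, (-1) ^ #s

def pathSeq : ℕ → ℤ
  | 0 => 1
  | 1 => 0
  | n + 2 => pathSeq (n + 1) - pathSeq n

lemma pathSeq_add_three (n : ℕ) : pathSeq (n + 3) = -pathSeq n := by
  rw [pathSeq, pathSeq]; ring

lemma pathSeq_three_mul_add (j r : ℕ) : pathSeq (3 * j + r) = (-1) ^ j * pathSeq r := by
  induction j with
  | zero => simp
  | succ j ih =>
    rw [show 3 * (j + 1) + r = 3 * j + r + 3 by ring, pathSeq_add_three, ih]
    ring

lemma filter_notMem_powerset {α : Type*} [DecidableEq α] (S : Finset α) (x : α) :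
    {t ∈ S.powerset | x ∉ t} = (S.erase x).powerset := by
  ext t
  simp [subset_erase]

lemma noConsecutive_insert_succ {t : Finset ℕ} {x : ℕ} (ht : ∀ y ∈ t, y ≤ x) :
    NoConsecutive (insert (x + 1) t) ↔ NoConsecutive t ∧ x ∉ t := by
  unfold NoConsecutive
  constructor
  · intro h
    exact ⟨fun i hi hi1 => h i (mem_insert_of_mem hi) (mem_insert_of_mem hi1),
      fun hx => h x (mem_insert_of_mem hx) (mem_insert_self _ _)⟩
  · rintro ⟨h, hx⟩ i hi hi1
    simp only [mem_insert] at hi hi1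
    grind

lemma altIndepSum_insert_succ {S : Finset ℕ} {x : ℕ} (hS : ∀ y ∈ S, y ≤ x) :
    altIndepSum (insert (x + 1) S) = altIndepSum S - altIndepSum (S.erase x) := by
  have hx : x + 1 ∉ S := fun h => by have := hS _ h; omega
  have hinsert : ∀ t ∈ S.powerset,
      (if NoConsecutive (insert (x + 1) t) then (-1 : ℤ) ^ #(insert (x + 1) t) else 0) =
        -if x ∉ t ∧ NoConsecutive t then (-1) ^ #t else 0 := by
    intro t ht
    have ht' : t ⊆ S := mem_powerset.1 ht
    rw [noConsecutive_insert_succ fun y hy => hS y (ht' hy), and_comm,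
      card_insert_of_notMem fun h => hx (ht' h)]
    split_ifs <;> ring
  rw [altIndepSum, sum_filter, sum_powerset_insert hx, sum_congr rfl hinsert, sum_neg_distrib,
    ← sum_filter, ← sum_filter, altIndepSum, altIndepSum, ← filter_notMem_powerset, filter_filter,
    sub_eq_add_neg]

lemma altIndepSum_Ico (a : ℕ) : ∀ n, altIndepSum (Ico a (a + n)) = pathSeq n
  | 0 => by simp [altIndepSum, pathSeq, sum_filter, NoConsecutive]
  | 1 => by
    rw [Nat.Ico_succ_singleton, ← insert_empty, altIndepSum, sum_filter,
      sum_powerset_insert (notMem_empty a)]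
    simp [NoConsecutive, pathSeq]
  | n + 2 => by
    have hI : Ico a (a + (n + 2)) = insert (a + n + 1) (Ico a (a + (n + 1))) := by
      ext; simp; omega
    have hE : (Ico a (a + (n + 1))).erase (a + n) = Ico a (a + n) := by
      ext; simp; omega
    rw [hI, altIndepSum_insert_succ (by simp; omega), hE, altIndepSum_Ico a (n + 1),
      altIndepSum_Ico a n, pathSeq]

lemma sum_noConsecutive_cyclic (k : ℕ) :
    ∑ s ∈ (range (k + 3)).powerset with NoConsecutive s ∧ ¬(0 ∈ s ∧ k + 2 ∈ s), (-1 : ℤ) ^ #s =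
      altIndepSum (range (k + 2)) - altIndepSum (Ico 1 (k + 1)) := by
  have hx : k + 2 ∉ range (k + 2) := by simp
  have hbound : ∀ t ∈ (range (k + 2)).powerset, ∀ y ∈ t, y ≤ k + 1 := fun t ht y hy =>
    Nat.le_of_lt_succ (mem_range.1 (mem_powerset.1 ht hy))
  have hfirst : ∀ t ∈ (range (k + 2)).powerset,
      (if NoConsecutive t ∧ ¬(0 ∈ t ∧ k + 2 ∈ t) then (-1 : ℤ) ^ #t else 0) =
        if NoConsecutive t then (-1) ^ #t else 0 := by
    intro t ht
    have : k + 2 ∉ t := fun h => by have := hbound t ht _ h; omega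
    simp only [this, and_false, not_false_eq_true, and_true]
  have hsecond : ∀ t ∈ (range (k + 2)).powerset,
      (if NoConsecutive (insert (k + 2) t) ∧ ¬(0 ∈ insert (k + 2) t ∧ k + 2 ∈ insert (k + 2) t)
        then (-1 : ℤ) ^ #(insert (k + 2) t) else 0) =
        -if (0 ∉ t ∧ k + 1 ∉ t) ∧ NoConsecutive t then (-1) ^ #t else 0 := by
    intro t ht
    have hcond : (NoConsecutive (insert (k + 2) t) ∧
        ¬(0 ∈ insert (k + 2) t ∧ k + 2 ∈ insert (k + 2) t)) ↔
        (0 ∉ t ∧ k + 1 ∉ t) ∧ NoConsecutive t := by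
      rw [noConsecutive_insert_succ (hbound t ht)]
      simp only [mem_insert, true_or, and_true, (k + 1).succ_ne_zero.symm, false_or]
      tauto
    simp only [hcond, card_insert_of_notMem fun h => hx (mem_powerset.1 ht h), pow_succ]
    split_ifs <;> ring
  have hends : {t ∈ (range (k + 2)).powerset | 0 ∉ t ∧ k + 1 ∉ t} = (Ico 1 (k + 1)).powerset := by
    ext t
    simp only [mem_filter, mem_powerset, subset_iff, mem_range, mem_Ico]
    grind
  rw [range_add_one, sum_filter, sum_powerset_insert hx, sum_congr rfl hfirst,
    sum_congr rfl hsecond, sum_neg_distrib, ← sum_filter, ← sum_filter, ← filter_filter, hends,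
    altIndepSum, altIndepSum, sub_eq_add_neg]

lemma powerset_range_eq_map (m : ℕ) :
    (range m).powerset = univ.map (mapEmbedding (Fin.valEmbedding (n := m))).toEmbedding := by
  ext t
  simp only [mem_powerset, mem_map, mem_univ, true_and, RelEmbedding.coe_toEmbedding,
    mapEmbedding_apply, ← Nat.Iio_eq_range, ← Fin.map_valEmbedding_univ, subset_map_iff]
  grind

lemma Fin.val_sub_eq_one_iff {n : ℕ} {u v : Fin (n + 2)} :
    (u - v).val = 1 ↔ u.val = v.val + 1 ∨ (u.val = 0 ∧ v.val = n + 1) := by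
  rcases le_or_gt v u with h | h
  · rw [Fin.sub_val_of_le h]; omega
  · rw [Fin.coe_sub_iff_lt.2 h]; omega

lemma isIndep_cycleGraph_iff {n : ℕ} (s : Finset (Fin (n + 2))) :
    (SimpleGraph.cycleGraph (n + 2)).IsIndep s ↔
      NoConsecutive (s.map Fin.valEmbedding) ∧
        ¬(0 ∈ s.map Fin.valEmbedding ∧ n + 1 ∈ s.map Fin.valEmbedding) := by
  simp only [SimpleGraph.IsIndep, NoConsecutive, SimpleGraph.cycleGraph_adj',
    Fin.val_sub_eq_one_iff, mem_map, Fin.valEmbedding_apply, forall_exists_index, and_imp,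
    forall_apply_eq_imp_iff₂]
  constructor
  · intro h
    exact ⟨fun u hu ⟨v, hv, hvu⟩ => h v hv u hu (.inl (.inl hvu)),
      fun ⟨⟨u, hu, hu0⟩, v, hv, hvn⟩ => h u hu v hv (.inl (.inr ⟨hu0, hvn⟩))⟩
  · rintro ⟨h, h'⟩ u hu v hv ((huv | ⟨hu0, hvn⟩) | hvu | ⟨hv0, hun⟩)
    · exact h v hv ⟨u, hu, huv⟩
    · exact h' ⟨⟨u, hu, hu0⟩, v, hv, hvn⟩
    · exact h u hu ⟨v, hv, hvu⟩
    · exact h' ⟨⟨v, hv, hv0⟩, u, hu, hun⟩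

lemma sum_indep_cycleGraph (n : ℕ) :
    ∑ s ∈ univ.filter (SimpleGraph.cycleGraph (n + 2)).IsIndep, (-1 : ℤ) ^ #s =
      ∑ t ∈ (range (n + 2)).powerset with NoConsecutive t ∧ ¬(0 ∈ t ∧ n + 1 ∈ t), (-1) ^ #t := by
  rw [powerset_range_eq_map, filter_map, sum_map]
  refine sum_congr ?_ fun s _ => by simp
  ext s
  simp [isIndep_cycleGraph_iff]

lemma sum_indep_cycleGraph_eq_pathSeq (k : ℕ) :
    ∑ s ∈ univ.filter (SimpleGraph.cycleGraph (k + 3)).IsIndep, (-1 : ℤ) ^ #s =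
      pathSeq (k + 2) - pathSeq k := by
  rw [sum_indep_cycleGraph, sum_noConsecutive_cyclic, ← altIndepSum_Ico 0, ← altIndepSum_Ico 1,
    zero_add, add_comm 1 k, range_eq_Ico]

/-- For the cycle `C_m` (`m ≥ 3`), the alternating sum `∑_σ (-1)^{|σ|}` over independent
sets equals `2·(-1)^n` when `m = 3n`, and has absolute value `1` when `3 ∤ m`. -/
theorem alternating_sum_indep_cycle (m : ℕ) (hm : 3 ≤ m) :
    (∀ n : ℕ, m = 3 * n →
        ∑ s ∈ Finset.univ.filter (SimpleGraph.cycleGraph m).IsIndep,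
          (-1 : ℤ) ^ s.card = 2 * (-1) ^ n)
    ∧ (¬ (3 ∣ m) →
        (∑ s ∈ Finset.univ.filter (SimpleGraph.cycleGraph m).IsIndep,
          (-1 : ℤ) ^ s.card).natAbs = 1) := by
  obtain ⟨j, r, hr, rfl⟩ : ∃ j r, r < 3 ∧ m = 3 * j + r + 3 :=
    ⟨m / 3 - 1, m % 3, by omega, by omega⟩
  rw [sum_indep_cycleGraph_eq_pathSeq, add_assoc (3 * j) r 2, pathSeq_three_mul_add,
    pathSeq_three_mul_add]
  interval_cases r
  · refine ⟨fun n hn => ?_, fun h => absurd ⟨j + 1, by ring⟩ h⟩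
    obtain rfl : n = j + 1 := by omega
    simp only [pathSeq, pow_succ]
    ring
  · exact ⟨fun n hn => by omega, fun _ => by simp [pathSeq, Int.natAbs_pow]⟩
  · exact ⟨fun n hn => by omega, fun _ => by simp [pathSeq, Int.natAbs_pow]⟩
end

section
/- Let G be a graph and R ⊆ V(G) a set of vertices such that every two distinct vertices of R are at distance at least 3 in G, and every independent set of G \ R has size at most |R|. Then for every independent set σ of G \ R with ∪_{v∈σ} N(v) ⊇ R, σ has exactly |R| elements and each vertex of R has exactly one neighbor in σ. -/
/-!
Distinct vertices of `R` have no common neighbor, so every vertex of `σ` dominates at most one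
vertex of `R`; double counting gives `|R| ≤ |σ|`, and maximality gives equality. If some `w ∈ R` had two
neighbors `v₁ ≠ v₂` in `σ`, then `σ \ {v₂}` would still dominate `R` (no other vertex of `R`
sees `v₂`), forcing `|R| < |σ|`.
-/

open Finset

attribute [local instance] Classical.propDecidable

namespace Finset

variable {α β : Type*} {s : Finset α} {t : Finset β}

theorem existsUnique_of_forall_subsingleton_of_card_le (r : α → β → Prop)
    (hs : ∀ a ∈ s, ∃ b, b ∈ t ∧ r a b)
    (ht : ∀ b ∈ t, ({a ∈ s | r a b} : Set α).Subsingleton) (hcard : #t ≤ #s) :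
    ∀ a ∈ s, ∃! b, b ∈ t ∧ r a b := by
  intro a ha
  obtain ⟨b, hb, hab⟩ := hs a ha
  refine ⟨b, ⟨hb, hab⟩, fun b' ⟨hb', hab'⟩ => ?_⟩
  by_contra hne
  have hs' : ∀ a' ∈ s, ∃ c, c ∈ t.erase b' ∧ r a' c := by
    intro a' ha'
    obtain ⟨c, hc, ha'c⟩ := hs a' ha'
    by_cases hcb' : c = b'
    · subst hcb'
      obtain rfl : a' = a := ht c hb' ⟨ha', ha'c⟩ ⟨ha, hab'⟩
      exact ⟨b, mem_erase.2 ⟨Ne.symm hne, hb⟩, hab⟩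
    · exact ⟨c, mem_erase.2 ⟨hcb', hc⟩, ha'c⟩
  have := card_le_card_of_forall_subsingleton r hs' fun c hc => ht c (mem_of_mem_erase hc)
  have := card_erase_lt_of_mem hb'
  omega

end Finset

theorem SimpleGraph.subsingleton_adj_of_forall_not_adj_adj {V : Type*} (G : SimpleGraph V)
    {R : Finset V} (hR : ∀ u ∈ R, ∀ w ∈ R, u ≠ w → ∀ x : V, ¬(G.Adj u x ∧ G.Adj w x)) (v : V) :
    ({w ∈ R | G.Adj v w} : Set V).Subsingleton := by
  intro u hu w hw
  by_contra hne
  exact hR u hu.1 w hw.1 hne v ⟨hu.2.symm, hw.2.symm⟩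

theorem generalized_three_rule_core_general {V : Type*} (G : SimpleGraph V)
    (R : Finset V)
    (hdist : ∀ u ∈ R, ∀ w ∈ R, u ≠ w →
      ¬ G.Adj u w ∧ ∀ x : V, ¬(G.Adj u x ∧ G.Adj w x))
    (hmax : ∀ σ : Finset V, (∀ x ∈ σ, x ∉ R) → G.IsIndep σ → σ.card ≤ R.card) :
    ∀ σ : Finset V, (∀ x ∈ σ, x ∉ R) → G.IsIndep σ →
      (∀ w ∈ R, ∃ v ∈ σ, G.Adj v w) →
      σ.card = R.card ∧ ∀ w ∈ R, ∃! v : V, v ∈ σ ∧ G.Adj v w := by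
  intro σ hσR hind hcov
  have hsub := G.subsingleton_adj_of_forall_not_adj_adj fun u hu w hw hne => (hdist u hu w hw hne).2
  have hcard : σ.card = R.card :=
    (hmax σ hσR hind).antisymm
      (card_le_card_of_forall_subsingleton (fun w v => G.Adj v w) hcov fun v _ => hsub v)
  exact ⟨hcard, existsUnique_of_forall_subsingleton_of_card_le (fun w v => G.Adj v w) hcov
    (fun v _ => hsub v) hcard.le⟩

/-- (Core of the generalized 3-rule.)  Suppose every two distinct vertices of `R` are at
distance at least `3` in `G` (non-adjacent and with no common neighbor), and every
independent set of `G \ R` has at most `|R|` elements.  Then every independent set `σ`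
of `G \ R` whose neighborhoods cover `R` has exactly `|R|` elements, and every vertex of
`R` has exactly one neighbor in `σ`. -/
theorem generalized_three_rule_core {V : Type*} [Fintype V] (G : SimpleGraph V)
    (R : Finset V)
    (hdist : ∀ u ∈ R, ∀ w ∈ R, u ≠ w →
      ¬ G.Adj u w ∧ ∀ x : V, ¬(G.Adj u x ∧ G.Adj w x))
    (hmax : ∀ σ : Finset V, (∀ x ∈ σ, x ∉ R) → G.IsIndep σ → σ.card ≤ R.card) :
    ∀ σ : Finset V, (∀ x ∈ σ, x ∉ R) → G.IsIndep σ →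
      (∀ w ∈ R, ∃ v ∈ σ, G.Adj v w) →
      σ.card = R.card ∧ ∀ w ∈ R, ∃! v : V, v ∈ σ ∧ G.Adj v w :=
  generalized_three_rule_core_general G R hdist hmax
end

section
/- Let G be a graph and R ⊆ V(G) such that all pairs of distinct vertices in R are at distance at least 3, and no independent set of G \ R has more than |R| elements. Then the reduced homology of Ind(G) over Q is concentrated in dimension |R| − 1, and its rank K equals the number of independent sets σ of G \ R of size |R| with R ⊆ ∪_{v ∈ σ} N(v). -/
open Finset

attribute [local instance] Classical.propDecidable

variable {V : Type*} [Fintype V] [LinearOrder V]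

/-- The faces of the independence complex `Ind(G)` with exactly `k` vertices
(i.e. of dimension `k - 1`); for `k = 0` this is just the empty face. -/
def IndFace (G : SimpleGraph V) (k : ℕ) : Type _ :=
  {s : Finset V // G.IsIndep s ∧ s.card = k}

/-- The space of rational `k`-chains (spanned by faces with `k` vertices) of the
(augmented) simplicial chain complex of `Ind(G)`. -/
abbrev IndChains (G : SimpleGraph V) (k : ℕ) : Type _ := IndFace G k →₀ ℚ

/-- The boundary of a face with `k+1` vertices: the alternating sum of its codimension
one subfaces, with signs determined by the linear order on the vertices.  For `k = 0`
this is the augmentation map to the span of the empty face. -/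
noncomputable def indBoundaryOf (G : SimpleGraph V) (k : ℕ) (s : IndFace G (k + 1)) :
    IndChains G k :=
  ∑ x ∈ s.1.attach,
    ((-1 : ℚ) ^ (s.1.filter (fun y => y < x.1)).card) •
      Finsupp.single
        (⟨s.1.erase x.1,
          fun u hu v hv => s.2.1 u (Finset.mem_of_mem_erase hu) v (Finset.mem_of_mem_erase hv),
          by simp [Finset.card_erase_of_mem x.2, s.2.2]⟩ : IndFace G k) 1

/-- The simplicial boundary operator of the augmented chain complex of `Ind(G)`. -/
noncomputable def indBoundary (G : SimpleGraph V) (k : ℕ) :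
    IndChains G (k + 1) →ₗ[ℚ] IndChains G k :=
  Finsupp.lsum ℚ (fun s => LinearMap.toSpanSingleton ℚ _ (indBoundaryOf G k s))

/-- The dimension over `ℚ` of the reduced simplicial homology group
`H̃_i(Ind(G); ℚ)`: cycles in dimension `i` (faces with `i+1` vertices) modulo
boundaries from dimension `i+1`.  The augmented complex (with the empty face in
degree `-1`) yields reduced homology. -/
noncomputable def reducedHomologyRank (G : SimpleGraph V) (i : ℕ) : ℕ :=
  Module.finrank ℚ
    (LinearMap.ker (indBoundary G i) ⧸
      (LinearMap.range (indBoundary G (i + 1))).comap (LinearMap.ker (indBoundary G i)).subtype)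

/-!
The chains of `Ind(G)` live inside the augmented chain complex of the full simplex on the
vertices, which is a cone with apex any vertex `r`: for `c_r σ = ±(σ ∪ {r})` one has
`∂ c_r + c_r ∂ = id`. If `r` has no neighbour in an independent set `σ`, then `σ ∪ {r}` is again
independent, so coning off with apex `r` the part of a cycle carried by such faces stays inside
`Ind(G)`. Since the vertices of `R` are pairwise non-adjacent, doing this for the vertices of `R`
one at a time shows that every cycle carried by faces that do not dominate `R` bounds a chain with
the same property.

An independent set dominating `R` is disjoint from `R`, and it has at least `|R|` vertices because
distinct vertices of `R` have no common neighbour; by maximality it has exactly `|R|` vertices, so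
no facet of a larger face dominates `R`. Hence all cycles bound outside dimension `|R| - 1`, and in
dimension `|R| - 1` the coefficients on the dominating faces identify the homology with `ℚ^K`.
-/

namespace Finsupp

variable {R β γ : Type*} [Semiring R]

theorem linearCombination_mem_supported {F : Set β} {F' : Set γ} {v : β → γ →₀ R}
    (hv : ∀ s ∈ F, v s ∈ supported R R F') {z : β →₀ R} (hz : z ∈ supported R R F) :
    linearCombination R v z ∈ supported R R F' := by
  have hspan := span_image_eq_map_linearCombination R (v := v) F
  refine Submodule.span_le.mpr ?_ (hspan ▸ Submodule.mem_map_of_mem hz)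
  rintro _ ⟨s, hs, rfl⟩
  exact hv s hs

theorem filter_mem_supported_inter {F : Set β} {z : β →₀ R} (hz : z ∈ supported R R F)
    (p : β → Prop) [DecidablePred p] : z.filter p ∈ supported R R (F ∩ {s | p s}) := fun s hs => by
  rw [Finset.mem_coe, support_filter, Finset.mem_filter] at hs
  exact ⟨hz hs.1, hs.2⟩

end Finsupp

namespace FullSimplex

variable {α : Type*} [LinearOrder α]

noncomputable def sign (s : Finset α) (x : α) : ℚ := (-1) ^ #{y ∈ s | y < x}

noncomputable def faceBoundary (s : Finset α) : Finset α →₀ ℚ :=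
  ∑ x ∈ s, sign s x • Finsupp.single (s.erase x) 1

noncomputable def boundary : (Finset α →₀ ℚ) →ₗ[ℚ] Finset α →₀ ℚ :=
  Finsupp.linearCombination ℚ faceBoundary

noncomputable def coneFace (r : α) (s : Finset α) : Finset α →₀ ℚ :=
  if r ∈ s then 0 else sign s r • Finsupp.single (insert r s) 1

noncomputable def cone (r : α) : (Finset α →₀ ℚ) →ₗ[ℚ] Finset α →₀ ℚ :=
  Finsupp.linearCombination ℚ (coneFace r)

theorem sign_insert {s : Finset α} {x : α} (hx : x ∉ s) (y : α) :
    sign (insert x s) y = (if x < y then -1 else 1) * sign s y := by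
  unfold sign
  rw [Finset.filter_insert]
  split_ifs with h
  · rw [Finset.card_insert_of_notMem (fun h' => hx (Finset.mem_filter.mp h').1), pow_succ,
      mul_comm]
  · rw [one_mul]

theorem sign_erase {s : Finset α} {x : α} (hx : x ∈ s) (y : α) :
    sign s y = (if x < y then -1 else 1) * sign (s.erase x) y := by
  rw [← sign_insert (Finset.notMem_erase x s), Finset.insert_erase hx]

theorem sign_mul_self (s : Finset α) (x : α) : sign s x * sign s x = 1 := by
  rw [sign, ← pow_add, ← two_mul, pow_mul]
  norm_num

theorem ite_lt_add_ite_lt {x y : α} (h : x ≠ y) :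
    ((if x < y then -1 else 1) + (if y < x then -1 else 1) : ℚ) = 0 := by
  rcases h.lt_or_gt with h | h <;> simp [h, h.not_gt]

theorem ite_lt_mul_ite_lt {x y : α} (h : x ≠ y) :
    ((if x < y then -1 else 1) * (if y < x then -1 else 1) : ℚ) = -1 := by
  rcases h.lt_or_gt with h | h <;> simp [h, h.not_gt]

theorem boundary_single (s : Finset α) (c : ℚ) :
    boundary (Finsupp.single s c) = c • faceBoundary s :=
  Finsupp.linearCombination_single ℚ c s

theorem cone_single (r : α) (s : Finset α) (c : ℚ) :
    cone r (Finsupp.single s c) = c • coneFace r s :=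
  Finsupp.linearCombination_single ℚ c s

theorem boundary_faceBoundary (s : Finset α) : boundary (faceBoundary s) = 0 := by
  set g : α → α → Finset α →₀ ℚ := fun x y =>
    if x = y then 0 else (sign s x * sign (s.erase x) y) • Finsupp.single ((s.erase x).erase y) 1
  have hg : ∀ x ∈ s, ∀ y ∈ s, g y x = -g x y := by
    intro x hx y hy
    by_cases hxy : x = y
    · simp [g, hxy]
    simp only [g, hxy, Ne.symm hxy, if_false, ← neg_smul]
    rw [sign_erase hy x, sign_erase hx y, Finset.erase_right_comm]
    congr 1
    linear_combination (sign (s.erase x) y * sign (s.erase y) x) * ite_lt_add_ite_lt hxy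
  have hsum : boundary (faceBoundary s) = ∑ x ∈ s, ∑ y ∈ s, g x y := by
    simp only [faceBoundary, map_sum, map_smul, boundary_single, Finset.smul_sum, smul_smul]
    refine Finset.sum_congr rfl fun x _ => ?_
    rw [← Finset.sum_erase (a := x) s (by simp [g])]
    exact Finset.sum_congr rfl fun y hy => by simp [g, (Finset.ne_of_mem_erase hy).symm]
  have hanti : ∑ x ∈ s, ∑ y ∈ s, g x y = -∑ x ∈ s, ∑ y ∈ s, g x y := by
    conv_lhs => rw [Finset.sum_comm]
    simp only [← Finset.sum_neg_distrib]
    exact Finset.sum_congr rfl fun y hy => Finset.sum_congr rfl fun x hx => hg y hy x hx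
  rw [hsum]
  exact self_eq_neg.mp hanti

theorem boundary_boundary (z : Finset α →₀ ℚ) : boundary (boundary z) = 0 := by
  induction z using Finsupp.induction_linear with
  | zero => simp
  | add z w hz hw => rw [map_add, map_add, hz, hw, add_zero]
  | single s c => rw [boundary_single, map_smul, boundary_faceBoundary, smul_zero]

theorem boundary_coneFace_add_cone_faceBoundary (r : α) (s : Finset α) :
    boundary (coneFace r s) + cone r (faceBoundary s) = Finsupp.single s 1 := by
  simp only [faceBoundary, map_sum, map_smul, cone_single, one_smul]
  by_cases hr : r ∈ s
  · rw [coneFace, if_pos hr, map_zero, zero_add, Finset.sum_eq_single r]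
    · rw [coneFace, if_neg (Finset.notMem_erase r s), smul_smul, sign_erase hr r,
        Finset.insert_erase hr]
      simp [sign_mul_self]
    · intro x _ hxr
      rw [coneFace, if_pos (Finset.mem_erase.mpr ⟨Ne.symm hxr, hr⟩), smul_zero]
    · exact fun h => absurd hr h
  · rw [coneFace, if_neg hr, map_smul, boundary_single, one_smul, faceBoundary,
      Finset.sum_insert hr, Finset.erase_insert hr, smul_add, add_assoc, Finset.smul_sum,
      ← Finset.sum_add_distrib, smul_smul]
    have hterm : ∀ x ∈ s, sign s r • sign (insert r s) x • Finsupp.single ((insert r s).erase x) 1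
        + sign s x • coneFace r (s.erase x) = 0 := by
      intro x hx
      have hxr : x ≠ r := fun h => hr (h ▸ hx)
      rw [coneFace, if_neg (fun h => hr (Finset.mem_of_mem_erase h)),
        Finset.erase_insert_of_ne hxr.symm, smul_smul, smul_smul, ← add_smul,
        sign_insert hr x, sign_erase hx r]
      convert zero_smul ℚ _
      linear_combination (sign (s.erase x) r * sign s x) * ite_lt_mul_ite_lt hxr
    rw [Finset.sum_eq_zero hterm, add_zero, sign_insert hr r, if_neg (lt_irrefl r), one_mul,
      sign_mul_self, one_smul]

theorem boundary_cone_add_cone_boundary (r : α) (z : Finset α →₀ ℚ) :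
    boundary (cone r z) + cone r (boundary z) = z := by
  induction z using Finsupp.induction_linear with
  | zero => simp
  | add z w hz hw => rw [map_add, map_add, map_add, map_add, add_add_add_comm, hz, hw]
  | single s c =>
    rw [cone_single, boundary_single, map_smul, map_smul, ← smul_add,
      boundary_coneFace_add_cone_faceBoundary, Finsupp.smul_single_one]

theorem boundary_mem_supported {F F' : Set (Finset α)} {z : Finset α →₀ ℚ}
    (hz : z ∈ Finsupp.supported ℚ ℚ F) (hF : ∀ s ∈ F, ∀ x ∈ s, s.erase x ∈ F') :
    boundary z ∈ Finsupp.supported ℚ ℚ F' :=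
  Finsupp.linearCombination_mem_supported (fun s hs => Submodule.sum_mem _ fun x hx =>
    Submodule.smul_mem _ _ (Finsupp.single_mem_supported ℚ 1 (hF s hs x hx))) hz

theorem cone_mem_supported {r : α} {F F' : Set (Finset α)} {z : Finset α →₀ ℚ}
    (hz : z ∈ Finsupp.supported ℚ ℚ F) (hF : ∀ s ∈ F, r ∉ s → insert r s ∈ F') :
    cone r z ∈ Finsupp.supported ℚ ℚ F' := by
  refine Finsupp.linearCombination_mem_supported (fun s hs => ?_) hz
  unfold coneFace
  split_ifs with hr
  · exact zero_mem _
  · exact Submodule.smul_mem _ _ (Finsupp.single_mem_supported ℚ 1 (hF s hs hr))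

end FullSimplex

namespace SimpleGraph

variable {α : Type*} {G : SimpleGraph α} {s t R : Finset α} {r : α}

theorem IsIndep.mono_s15 (hs : G.IsIndep s) (hts : t ⊆ s) : G.IsIndep t :=
  fun u hu v hv => hs u (hts hu) v (hts hv)

theorem IsIndep.insert (hs : G.IsIndep s) (hr : ∀ v ∈ s, ¬ G.Adj v r) :
    G.IsIndep (insert r s) := by
  intro u hu v hv
  rcases Finset.mem_insert.mp hu with rfl | hu' <;> rcases Finset.mem_insert.mp hv with rfl | hv'
  · exact G.irrefl
  · exact fun h => hr v hv' h.symm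
  · exact hr u hu'
  · exact hs u hu' v hv'

def Dominates (G : SimpleGraph α) (s R : Finset α) : Prop := ∀ w ∈ R, ∃ v ∈ s, G.Adj v w

theorem Dominates.mono_s15 (h : G.Dominates s R) (hst : s ⊆ t) : G.Dominates t R :=
  fun w hw => (h w hw).imp fun _ ⟨hv, hadj⟩ => ⟨hst hv, hadj⟩

theorem Dominates.anti {R' : Finset α} (h : G.Dominates s R) (hR : R' ⊆ R) : G.Dominates s R' :=
  fun w hw => h w (hR hw)

theorem Dominates.insert_of_adj (h : G.Dominates s R) (hr : ∃ v ∈ s, G.Adj v r) :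
    G.Dominates s (insert r R) :=
  Finset.forall_mem_insert _ _ _ |>.mpr ⟨hr, h⟩

theorem Dominates.of_insert (h : G.Dominates (insert r s) R) (hr : ∀ w ∈ R, ¬ G.Adj r w) :
    G.Dominates s R := by
  intro w hw
  obtain ⟨v, hv, hadj⟩ := h w hw
  rcases Finset.mem_insert.mp hv with rfl | hv
  · exact absurd hadj (hr w hw)
  · exact ⟨v, hv, hadj⟩

theorem Dominates.notMem_of_isIndep (h : G.Dominates s R) (hs : G.IsIndep s) {x : α}
    (hx : x ∈ s) : x ∉ R := fun hxR => by
  obtain ⟨v, hv, hadj⟩ := h x hxR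
  exact hs v hv x hx hadj

theorem Dominates.card_le
    (hR : ∀ u ∈ R, ∀ w ∈ R, u ≠ w → ∀ x, ¬(G.Adj u x ∧ G.Adj w x)) (h : G.Dominates s R) :
    R.card ≤ s.card :=
  Finset.card_le_card_of_forall_subsingleton (fun w v => G.Adj v w) h
    fun v _ u hu w hw => by_contra fun huw => hR u hu.1 w hw.1 huw v ⟨hu.2.symm, hw.2.symm⟩

theorem not_dominates_insert_self (hr : ∀ v ∈ s, ¬ G.Adj v r) :
    ¬ G.Dominates (insert r s) (insert r R) := fun h => by
  obtain ⟨v, hv, hadj⟩ := h r (Finset.mem_insert_self r R)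
  rcases Finset.mem_insert.mp hv with rfl | hv
  · exact G.irrefl hadj
  · exact hr v hv hadj

def indepFaces (G : SimpleGraph α) (k : ℕ) : Set (Finset α) := {s | G.IsIndep s ∧ s.card = k}

def nondominatingFaces (G : SimpleGraph α) (R : Finset α) (k : ℕ) : Set (Finset α) :=
  {s | G.IsIndep s ∧ s.card = k ∧ ¬ G.Dominates s R}

theorem nondominatingFaces_subset_indepFaces {k : ℕ} :
    G.nondominatingFaces R k ⊆ G.indepFaces k :=
  fun _ hs => ⟨hs.1, hs.2.1⟩

variable [LinearOrder α]

open FullSimplex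

theorem sub_boundary_cone_mem_supported {S : Finset α} {k : ℕ} (hrS : ∀ w ∈ S, ¬ G.Adj r w)
    {z : Finset α →₀ ℚ} (hz : z ∈ Finsupp.supported ℚ ℚ (G.nondominatingFaces (insert r S) k))
    (hcyc : boundary z = 0) :
    z - boundary (cone r (z.filter fun s => ∀ v ∈ s, ¬ G.Adj v r))
      ∈ Finsupp.supported ℚ ℚ (G.nondominatingFaces S k) := by
  set p : Finset α → Prop := fun s => ∀ v ∈ s, ¬ G.Adj v r
  set z₁ := z.filter p
  set z₂ := z.filter fun s => ¬ p s
  have hsplit : z₁ + z₂ = z := Finsupp.filter_add_filter_not z p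
  have hz₂ : z₂ ∈ Finsupp.supported ℚ ℚ (G.nondominatingFaces S k) := by
    refine Finsupp.supported_mono ?_ (Finsupp.filter_mem_supported_inter hz _)
    rintro s ⟨⟨hi, hc, hnd⟩, hs⟩
    refine ⟨hi, hc, fun hdom => hnd (hdom.insert_of_adj ?_)⟩
    simpa [p] using hs
  have hbd : boundary z₁ ∈ Finsupp.supported ℚ ℚ
      ({t | G.IsIndep t ∧ t.card + 1 = k ∧ p t} ∩ {t | ¬ G.Dominates t S}) := by
    rw [Finsupp.supported_inter, Submodule.mem_inf]
    refine ⟨boundary_mem_supported (Finsupp.filter_mem_supported_inter hz p) fun s hs x hx =>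
      ⟨hs.1.1.mono_s15 (s.erase_subset x), by rw [Finset.card_erase_add_one hx, hs.1.2.1],
      fun v hv => hs.2 v (Finset.mem_of_mem_erase hv)⟩, ?_⟩
    -- `z` is a cycle, so the faces of `∂ z₁` are also faces of `∂ z₂`.
    have hbd_neg : boundary z₁ = -boundary z₂ := by
      rw [eq_neg_iff_add_eq_zero, ← map_add, hsplit, hcyc]
    rw [hbd_neg]
    exact neg_mem (boundary_mem_supported hz₂ fun s hs x _ hdom =>
      hs.2.2 (hdom.mono_s15 (s.erase_subset x)))
  have hcone : z - boundary (cone r z₁) = z₂ + cone r (boundary z₁) := by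
    rw [← hsplit, eq_sub_of_add_eq (boundary_cone_add_cone_boundary r z₁)]
    abel
  rw [hcone]
  refine add_mem hz₂ (cone_mem_supported hbd fun t ht hrt => ?_)
  obtain ⟨⟨hi, hc, hp⟩, hnd⟩ := ht
  exact ⟨hi.insert hp, by rw [Finset.card_insert_of_notMem hrt, hc],
    fun hdom => hnd (hdom.of_insert hrS)⟩

theorem exists_boundary_eq_of_nondominating (hR : G.IsIndep R) {k : ℕ} {z : Finset α →₀ ℚ}
    (hz : z ∈ Finsupp.supported ℚ ℚ (G.nondominatingFaces R k)) (hcyc : boundary z = 0) :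
    ∃ w ∈ Finsupp.supported ℚ ℚ (G.nondominatingFaces R (k + 1)), boundary w = z := by
  induction R using Finset.induction_on generalizing z with
  | empty =>
    have : G.nondominatingFaces ∅ k = ∅ :=
      Set.eq_empty_of_forall_notMem fun s hs => hs.2.2 fun _ h => absurd h (Finset.notMem_empty _)
    rw [this, Finsupp.supported_empty, Submodule.mem_bot] at hz
    exact ⟨0, zero_mem _, by rw [hz, map_zero]⟩
  | insert r S _ ih =>
    have hrS : ∀ w ∈ S, ¬ G.Adj r w := fun w hw =>
      hR r (Finset.mem_insert_self r S) w (Finset.mem_insert_of_mem hw)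
    set z₁ := z.filter fun s => ∀ v ∈ s, ¬ G.Adj v r
    obtain ⟨w, hw, hbdw⟩ := ih (hR.mono_s15 (Finset.subset_insert r S))
      (sub_boundary_cone_mem_supported hrS hz hcyc)
      (by rw [map_sub, boundary_boundary, hcyc, sub_zero])
    refine ⟨cone r z₁ + w, add_mem ?_ ?_, by rw [map_add, hbdw, add_sub_cancel]⟩
    · refine cone_mem_supported (Finsupp.filter_mem_supported_inter hz _) fun s hs hrs => ?_
      obtain ⟨⟨hi, hc, -⟩, hp⟩ := hs
      exact ⟨hi.insert hp, by rw [Finset.card_insert_of_notMem hrs, hc],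
        not_dominates_insert_self hp⟩
    · refine Finsupp.supported_mono ?_ hw
      exact fun s hs => ⟨hs.1, hs.2.1, fun hdom => hs.2.2 (hdom.anti (Finset.subset_insert r S))⟩

end SimpleGraph

section IndComplex

open FullSimplex SimpleGraph

variable {α : Type*} (G : SimpleGraph α)

noncomputable def toSimplexChains (k : ℕ) : IndChains G k →ₗ[ℚ] Finset α →₀ ℚ :=
  Finsupp.lmapDomain ℚ ℚ fun s : IndFace G k => s.1

variable {G}

theorem toSimplexChains_single {k : ℕ} (s : IndFace G k) (c : ℚ) :
    toSimplexChains G k (Finsupp.single s c) = Finsupp.single s.1 c :=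
  Finsupp.mapDomain_single

theorem toSimplexChains_injective (k : ℕ) : Function.Injective (toSimplexChains G k) :=
  Finsupp.mapDomain_injective fun _ _ h => Subtype.ext h

theorem range_toSimplexChains (k : ℕ) :
    LinearMap.range (toSimplexChains G k) = Finsupp.supported ℚ ℚ (G.indepFaces k) := by
  rw [toSimplexChains, LinearMap.range_eq_map, ← Finsupp.supported_univ,
    Finsupp.lmapDomain_supported, Set.image_univ]
  congr 1
  ext s
  exact ⟨fun ⟨t, ht⟩ => ht ▸ t.2, fun hs => ⟨⟨s, hs⟩, rfl⟩⟩

theorem toSimplexChains_mem_supported {k : ℕ} (z : IndChains G k) :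
    toSimplexChains G k z ∈ Finsupp.supported ℚ ℚ (G.indepFaces k) :=
  range_toSimplexChains (G := G) k ▸ LinearMap.mem_range_self _ z

variable [LinearOrder α]

theorem toSimplexChains_indBoundaryOf {k : ℕ} (s : IndFace G (k + 1)) :
    toSimplexChains G k (indBoundaryOf G k s) = faceBoundary s.1 := by
  rw [indBoundaryOf, map_sum, faceBoundary,
    ← Finset.sum_attach s.1 (fun x => sign s.1 x • Finsupp.single (s.1.erase x) 1)]
  refine Finset.sum_congr rfl fun x _ => ?_
  exact (map_smul (toSimplexChains G k) _ _).trans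
    (congrArg (HSMul.hSMul _) (toSimplexChains_single _ 1))

theorem toSimplexChains_indBoundary {k : ℕ} (z : IndChains G (k + 1)) :
    toSimplexChains G k (indBoundary G k z) = boundary (toSimplexChains G (k + 1) z) := by
  suffices (toSimplexChains G k).comp (indBoundary G k) = boundary.comp (toSimplexChains G (k + 1))
    from LinearMap.congr_fun this z
  refine Finsupp.lhom_ext fun s c => ?_
  simp only [LinearMap.comp_apply, indBoundary, Finsupp.lsum_single,
    LinearMap.toSpanSingleton_apply, map_smul, toSimplexChains_single, boundary_single,
    toSimplexChains_indBoundaryOf]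

theorem mem_range_indBoundary_of_boundary_eq {k : ℕ} {z : IndChains G k}
    {w : Finset α →₀ ℚ} (hw : w ∈ Finsupp.supported ℚ ℚ (G.indepFaces (k + 1)))
    (h : boundary w = toSimplexChains G k z) : z ∈ LinearMap.range (indBoundary G k) := by
  obtain ⟨w, rfl⟩ := (range_toSimplexChains (G := G) (k + 1)).symm ▸ hw
  exact ⟨w, toSimplexChains_injective k (by rw [toSimplexChains_indBoundary, h])⟩

end IndComplex

section Homology

variable {α : Type*} [LinearOrder α] {G : SimpleGraph α} {i : ℕ}

theorem reducedHomologyRank_eq_zero_of_ker_le_range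
    (h : LinearMap.ker (indBoundary G i) ≤ LinearMap.range (indBoundary G (i + 1))) :
    reducedHomologyRank G i = 0 := by
  have := Submodule.Quotient.subsingleton_iff.mpr (Submodule.comap_subtype_eq_top.mpr h)
  exact Module.finrank_zero_of_subsingleton

theorem reducedHomologyRank_eq_card {ι : Type*} [Fintype ι]
    (φ : LinearMap.ker (indBoundary G i) →ₗ[ℚ] ι →₀ ℚ) (hφ : Function.Surjective φ)
    (hker : ∀ z, φ z = 0 ↔ (z : IndChains G (i + 1)) ∈ LinearMap.range (indBoundary G (i + 1))) :
    reducedHomologyRank G i = Fintype.card ι := by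
  have hker' : LinearMap.ker φ = (LinearMap.range (indBoundary G (i + 1))).comap
      (LinearMap.ker (indBoundary G i)).subtype := Submodule.ext hker
  rw [reducedHomologyRank, ← hker', (φ.quotKerEquivOfSurjective hφ).finrank_eq,
    Module.finrank_finsupp_self]

end Homology

section ThreeRule

open FullSimplex SimpleGraph

variable {α : Type*} [LinearOrder α] {G : SimpleGraph α} {R : Finset α}

theorem mem_range_indBoundary_of_nondominating (hR : G.IsIndep R) {i : ℕ}
    {z : IndChains G (i + 1)} (hz : indBoundary G i z = 0)
    (hnd : ∀ s ∈ (toSimplexChains G (i + 1) z).support, ¬ G.Dominates s R) :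
    z ∈ LinearMap.range (indBoundary G (i + 1)) := by
  have hsupp :
      toSimplexChains G (i + 1) z ∈ Finsupp.supported ℚ ℚ (G.nondominatingFaces R (i + 1)) :=
    fun s hs => ⟨(toSimplexChains_mem_supported z hs).1, (toSimplexChains_mem_supported z hs).2,
      hnd s hs⟩
  obtain ⟨w, hw, hbd⟩ := exists_boundary_eq_of_nondominating hR hsupp
    (by rw [← toSimplexChains_indBoundary, hz, map_zero])
  exact mem_range_indBoundary_of_boundary_eq
    (Finsupp.supported_mono nondominatingFaces_subset_indepFaces hw) hbd

theorem reducedHomologyRank_eq_zero_of_card_ne (hR : G.IsIndep R)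
    (hcard : ∀ σ, G.IsIndep σ → G.Dominates σ R → σ.card = R.card) {i : ℕ}
    (hi : i + 1 ≠ R.card) : reducedHomologyRank G i = 0 := by
  refine reducedHomologyRank_eq_zero_of_ker_le_range fun z hz =>
    mem_range_indBoundary_of_nondominating hR hz fun s hs hdom => hi ?_
  obtain ⟨hind, hs⟩ := toSimplexChains_mem_supported z hs
  rw [← hs, hcard s hind hdom]

theorem toSimplexChains_indBoundary_apply_eq_zero
    (hcard : ∀ σ, G.IsIndep σ → G.Dominates σ R → σ.card = R.card) {m : ℕ}
    (hm : R.card = m + 1) (w : IndChains G (m + 2)) {τ : Finset α} (hτ : G.Dominates τ R) :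
    toSimplexChains G (m + 1) (indBoundary G (m + 1) w) τ = 0 := by
  have hbd : toSimplexChains G (m + 1) (indBoundary G (m + 1) w)
      ∈ Finsupp.supported ℚ ℚ {s | ¬ G.Dominates s R} := by
    rw [toSimplexChains_indBoundary]
    refine boundary_mem_supported (toSimplexChains_mem_supported w) fun s hs x _ hdom => ?_
    have hs_card := hcard s hs.1 (hdom.mono_s15 (s.erase_subset x))
    have hs_card' := hs.2
    omega
  exact (Finsupp.mem_supported' ℚ _).mp hbd τ (not_not_intro hτ)

theorem exists_cycle_eq_single_on_dominating (hR : G.IsIndep R)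
    (hcard : ∀ σ, G.IsIndep σ → G.Dominates σ R → σ.card = R.card) {m : ℕ}
    (hm : R.card = m + 1) {σ : Finset α} (hσ : G.IsIndep σ) (hdom : G.Dominates σ R) :
    ∃ z : IndChains G (m + 1), indBoundary G m z = 0 ∧
      ∀ τ, G.Dominates τ R → toSimplexChains G (m + 1) z τ = Finsupp.single σ 1 τ := by
  have hσcard : σ.card = m + 1 := hm ▸ hcard σ hσ hdom
  have hfaces :
      boundary (Finsupp.single σ 1) ∈ Finsupp.supported ℚ ℚ (G.nondominatingFaces R m) :=
    boundary_mem_supported (Finsupp.single_mem_supported ℚ 1 (show σ ∈ {σ} from rfl))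
      fun s hs x hx => by
        subst hs
        refine ⟨hσ.mono_s15 (s.erase_subset x), by rw [Finset.card_erase_of_mem hx, hσcard]; rfl,
          fun hdom' => ?_⟩
        have hcard' := hcard _ (hσ.mono_s15 (s.erase_subset x)) hdom'
        rw [Finset.card_erase_of_mem hx] at hcard'
        omega
  obtain ⟨w, hw, hbd⟩ := exists_boundary_eq_of_nondominating hR hfaces (boundary_boundary _)
  have hu : Finsupp.single σ 1 - w ∈ Finsupp.supported ℚ ℚ (G.indepFaces (m + 1)) :=
    sub_mem (Finsupp.single_mem_supported ℚ 1 ⟨hσ, hσcard⟩)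
      (Finsupp.supported_mono nondominatingFaces_subset_indepFaces hw)
  obtain ⟨z, hz⟩ := (range_toSimplexChains (G := G) (m + 1)).symm ▸ hu
  refine ⟨z, toSimplexChains_injective m ?_, fun τ hτ => ?_⟩
  · rw [toSimplexChains_indBoundary, hz, map_sub, hbd, sub_self, map_zero]
  · rw [hz, Finsupp.sub_apply, (Finsupp.mem_supported' ℚ _).mp hw τ (fun h => h.2.2 hτ),
      sub_zero]

theorem reducedHomologyRank_eq_card_dominating [Fintype α] (hR : G.IsIndep R)
    (hcard : ∀ σ, G.IsIndep σ → G.Dominates σ R → σ.card = R.card) {m : ℕ}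
    (hm : R.card = m + 1) :
    reducedHomologyRank G m = #{σ | G.IsIndep σ ∧ G.Dominates σ R} := by
  set T : Finset (Finset α) := {σ | G.IsIndep σ ∧ G.Dominates σ R}
  have hT : ∀ σ, σ ∈ T ↔ G.IsIndep σ ∧ G.Dominates σ R := by simp [T]
  set φ := (Finsupp.lsubtypeDomain (T : Set (Finset α))).comp
    ((toSimplexChains G (m + 1)).comp (LinearMap.ker (indBoundary G m)).subtype)
  have hφ : ∀ z σ, φ z σ = toSimplexChains G (m + 1) z σ := fun _ _ => rfl
  rw [← Fintype.card_coe T]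
  refine reducedHomologyRank_eq_card φ ?_ fun z => ⟨fun h0 => ?_, ?_⟩
  · intro f
    induction f using Finsupp.induction_linear with
    | zero => exact ⟨0, map_zero φ⟩
    | add f g hf hg =>
      obtain ⟨z, rfl⟩ := hf
      obtain ⟨w, rfl⟩ := hg
      exact ⟨z + w, map_add φ z w⟩
    | single σ c =>
      obtain ⟨hσ, hdom⟩ := (hT σ).mp σ.2
      obtain ⟨z, hz, hzσ⟩ := exists_cycle_eq_single_on_dominating hR hcard hm hσ hdom
      refine ⟨c • ⟨z, hz⟩, ?_⟩
      ext τ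
      rw [map_smul, Finsupp.smul_apply, hφ, hzσ τ ((hT τ).mp τ.2).2]
      simp only [Finsupp.single_apply, Subtype.ext_iff, smul_eq_mul, mul_ite, mul_one, mul_zero]
  · refine mem_range_indBoundary_of_nondominating hR z.2 fun s hs hdom => ?_
    have hsT : s ∈ T := (hT s).mpr ⟨(toSimplexChains_mem_supported z.1 hs).1, hdom⟩
    exact Finsupp.mem_support_iff.mp hs ((hφ z ⟨s, hsT⟩).symm.trans (DFunLike.congr_fun h0 _))
  · rintro ⟨w, hw⟩
    ext τ
    rw [hφ, ← hw, toSimplexChains_indBoundary_apply_eq_zero hcard hm w ((hT τ).mp τ.2).2]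
    rfl

end ThreeRule

/-- The generalized 3-rule: if all pairs of distinct vertices of `R` are at distance at
least `3` (non-adjacent with no common neighbor) and no independent set of `G \ R` has
more than `|R|` elements, then the reduced rational homology of `Ind(G)` is concentrated
in dimension `|R| - 1`, where its rank equals the number of independent sets `σ` of
`G \ R` of size `|R|` with `R ⊆ ⋃_{v ∈ σ} N(v)`. -/
theorem generalized_three_rule_homology (G : SimpleGraph V) (R : Finset V)
    (hR : R.Nonempty)
    (hdist : ∀ u ∈ R, ∀ w ∈ R, u ≠ w →
      ¬ G.Adj u w ∧ ∀ x : V, ¬(G.Adj u x ∧ G.Adj w x))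
    (hmax : ∀ σ : Finset V, (∀ x ∈ σ, x ∉ R) → G.IsIndep σ → σ.card ≤ R.card) :
    reducedHomologyRank G (R.card - 1)
      = (Finset.univ.filter (fun σ => (∀ x ∈ σ, x ∉ R) ∧ G.IsIndep σ ∧
          σ.card = R.card ∧ ∀ w ∈ R, ∃ v ∈ σ, G.Adj v w)).card
    ∧ ∀ i : ℕ, i ≠ R.card - 1 → reducedHomologyRank G i = 0 := by
  have hRindep : G.IsIndep R := fun u hu w hw => by
    by_cases huw : u = w
    · exact huw ▸ G.irrefl
    · exact (hdist u hu w hw huw).1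
  have hcard : ∀ σ, G.IsIndep σ → G.Dominates σ R → σ.card = R.card := fun σ hσ hdom =>
    (hmax σ (fun _ => hdom.notMem_of_isIndep hσ) hσ).antisymm
      (hdom.card_le fun u hu w hw huw => (hdist u hu w hw huw).2)
  obtain ⟨m, hm⟩ : ∃ m, R.card = m + 1 := ⟨R.card - 1, (Nat.sub_add_cancel hR.card_pos).symm⟩
  refine ⟨?_, fun i hi => reducedHomologyRank_eq_zero_of_card_ne hRindep hcard (by omega)⟩
  rw [show R.card - 1 = m by omega, reducedHomologyRank_eq_card_dominating hRindep hcard hm]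
  congr 1
  refine Finset.filter_congr fun σ _ => ⟨fun ⟨hσ, hdom⟩ => ?_, fun h => ⟨h.2.1, h.2.2.2⟩⟩
  exact ⟨fun _ => hdom.notMem_of_isIndep hσ, hσ, hcard σ hσ hdom, hdom⟩
end

section
/- Let G be a graph and D ⊆ V(G) such that G \ D has no edges. For each independent set τ of G[D], the set of independent sets σ of G with σ ∩ D = τ is in bijection with the independent sets of the graph obtained from G by deleting D and all neighbors of vertices of τ; in particular Σ_{σ ∈ Ind(G)} (-1)^{|σ|} = Σ_{τ ∈ Ind(G[D])} (-1)^{|τ|} · Σ_{ρ ⊆ S(τ)} (-1)^{|ρ|}, where S(τ) = (V(G) \ D) \ ∪_{v∈τ} N(v), so |Σ_{σ ∈ Ind(G)} (-1)^{|σ|}| ≤ #{τ ∈ Ind(G[D]) : ∪_{v∈τ} N(v) ⊇ V(G) \ D}. -/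
/-!
Split an independent set `σ` of `G` as `σ = τ ∪ ρ` with `τ = σ ∩ D` and `ρ = σ \ D`. Since `G \ D`
has no edges, `ρ` may be any subset of `S(τ)`, the vertices outside `D` with no neighbour in `τ`.
The signed count of independent sets is therefore a sum over `τ ∈ Ind(G[D])` of `(-1)^|τ|` times
the alternating sum over the subsets of `S(τ)`, which vanishes unless `S(τ) = ∅`.
-/

open Finset

attribute [local instance] Classical.propDecidable

lemma Finset.union_inter_eq_left_of_disjoint {α : Type*} [DecidableEq α] {s t u : Finset α}
    (hs : s ⊆ u) (ht : Disjoint t u) : (s ∪ t) ∩ u = s := by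
  rw [union_inter_distrib_right, inter_eq_left.2 hs, disjoint_iff_inter_eq_empty.1 ht,
    union_empty]

lemma Finset.union_sdiff_eq_right_of_disjoint {α : Type*} [DecidableEq α] {s t u : Finset α}
    (hs : s ⊆ u) (ht : Disjoint t u) : (s ∪ t) \ u = t := by
  rw [union_sdiff_distrib, sdiff_eq_empty_iff_subset.2 hs, ht.sdiff_eq_left, empty_union]

lemma Int.natAbs_sum_neg_one_pow_le_card {ι : Type*} (s : Finset ι) (f : ι → ℕ) :
    (∑ i ∈ s, (-1 : ℤ) ^ f i).natAbs ≤ #s :=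
  (Int.natAbs_sum_le s _).trans_eq (by simp [Int.natAbs_pow])

namespace SimpleGraph

variable {V : Type*} {G : SimpleGraph V}

lemma IsIndep.mono_s16 {s t : Finset V} (ht : G.IsIndep t) (hst : s ⊆ t) : G.IsIndep s :=
  fun u hu v hv => ht u (hst hu) v (hst hv)

variable [Fintype V] [DecidableEq V] (G) (D : Finset V)

/-- The set `S(τ)`. -/
noncomputable def undominatedOutside (τ : Finset V) : Finset V :=
  Finset.univ.filter (fun w => w ∉ D ∧ ∀ v ∈ τ, ¬ G.Adj v w)

variable {G D}

lemma mem_undominatedOutside {τ : Finset V} {w : V} :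
    w ∈ G.undominatedOutside D τ ↔ w ∉ D ∧ ∀ v ∈ τ, ¬ G.Adj v w := by
  simp [undominatedOutside]

lemma undominatedOutside_eq_empty_iff {τ : Finset V} :
    G.undominatedOutside D τ = ∅ ↔ ∀ w, w ∉ D → ∃ v ∈ τ, G.Adj v w := by
  simp only [eq_empty_iff_forall_notMem, mem_undominatedOutside]
  grind

lemma disjoint_of_subset_undominatedOutside {τ ρ : Finset V}
    (hρ : ρ ⊆ G.undominatedOutside D τ) : Disjoint ρ D :=
  Finset.disjoint_left.2 fun _ hw => (mem_undominatedOutside.1 (hρ hw)).1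

lemma IsIndep.sdiff_subset_undominatedOutside {σ : Finset V} (hσ : G.IsIndep σ) :
    σ \ D ⊆ G.undominatedOutside D (σ ∩ D) := fun w hw =>
  mem_undominatedOutside.2 ⟨(mem_sdiff.1 hw).2,
    fun v hv => hσ v (mem_inter.1 hv).1 w (mem_sdiff.1 hw).1⟩

lemma IsIndep.union_of_subset_undominatedOutside
    (hedge : ∀ u v : V, u ∉ D → v ∉ D → ¬ G.Adj u v) {τ ρ : Finset V} (hτ : G.IsIndep τ)
    (hρ : ρ ⊆ G.undominatedOutside D τ) : G.IsIndep (τ ∪ ρ) := by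
  have hρ' : ∀ w ∈ ρ, w ∉ D ∧ ∀ v ∈ τ, ¬ G.Adj v w := fun w hw =>
    mem_undominatedOutside.1 (hρ hw)
  intro u hu v hv
  rcases mem_union.1 hu with hu | hu <;> rcases mem_union.1 hv with hv | hv
  · exact hτ u hu v hv
  · exact (hρ' v hv).2 u hu
  · exact fun h => (hρ' u hu).2 v hv h.symm
  · exact hedge u v (hρ' u hu).1 (hρ' v hv).1

noncomputable def indepFiberEquiv (hedge : ∀ u v : V, u ∉ D → v ∉ D → ¬ G.Adj u v) {τ : Finset V}
    (hτD : τ ⊆ D) (hτ : G.IsIndep τ) :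
    {σ : Finset V // G.IsIndep σ ∧ σ ∩ D = τ} ≃ {ρ : Finset V // ρ ⊆ G.undominatedOutside D τ} where
  toFun σ := ⟨σ.1 \ D, by simpa only [σ.2.2] using σ.2.1.sdiff_subset_undominatedOutside (D := D)⟩
  invFun ρ := ⟨τ ∪ ρ.1, hτ.union_of_subset_undominatedOutside hedge ρ.2,
    union_inter_eq_left_of_disjoint hτD (disjoint_of_subset_undominatedOutside ρ.2)⟩
  left_inv σ := Subtype.ext <| by
    obtain ⟨σ, -, rfl⟩ := σ
    exact sup_inf_sdiff σ D
  right_inv ρ := Subtype.ext <|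
    union_sdiff_eq_right_of_disjoint hτD (disjoint_of_subset_undominatedOutside ρ.2)

lemma sum_neg_one_pow_card_indep_fiber (hedge : ∀ u v : V, u ∉ D → v ∉ D → ¬ G.Adj u v)
    {τ : Finset V} (hτD : τ ⊆ D) (hτ : G.IsIndep τ) :
    ∑ σ ∈ univ.filter G.IsIndep with σ ∩ D = τ, (-1 : ℤ) ^ #σ
      = (-1 : ℤ) ^ #τ * ∑ ρ ∈ (G.undominatedOutside D τ).powerset, (-1 : ℤ) ^ #ρ := by
  have hcard (σ : {σ : Finset V // G.IsIndep σ ∧ σ ∩ D = τ}) :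
      #σ.1 = #τ + #(indepFiberEquiv hedge hτD hτ σ).1 := by
    obtain ⟨σ, -, rfl⟩ := σ
    exact (card_inter_add_card_sdiff σ D).symm
  rw [sum_subtype _ (F := Subtype.fintype _) (p := fun σ => G.IsIndep σ ∧ σ ∩ D = τ) (by simp),
    Fintype.sum_equiv (indepFiberEquiv hedge hτD hτ) _ (fun ρ => (-1 : ℤ) ^ (#τ + #ρ.1))
      (fun σ => by rw [hcard]),
    mul_sum, sum_subtype _ (F := Subtype.fintype _) (p := (· ⊆ G.undominatedOutside D τ)) (by simp)]
  simp only [pow_add]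

lemma sum_neg_one_pow_card_indep_eq (hedge : ∀ u v : V, u ∉ D → v ∉ D → ¬ G.Adj u v) :
    ∑ σ ∈ univ.filter G.IsIndep, (-1 : ℤ) ^ #σ
      = ∑ τ ∈ univ.filter (fun τ => τ ⊆ D ∧ G.IsIndep τ),
          (-1 : ℤ) ^ #τ * ∑ ρ ∈ (G.undominatedOutside D τ).powerset, (-1 : ℤ) ^ #ρ := by
  have hmaps : ∀ σ ∈ univ.filter G.IsIndep,
      σ ∩ D ∈ univ.filter (fun τ => τ ⊆ D ∧ G.IsIndep τ) := fun σ hσ =>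
    mem_filter.2 ⟨mem_univ _, inter_subset_right, (mem_filter.1 hσ).2.mono_s16 inter_subset_left⟩
  rw [← sum_fiberwise_of_maps_to hmaps]
  refine sum_congr rfl fun τ hτ => ?_
  obtain ⟨-, hτD, hτI⟩ := mem_filter.1 hτ
  exact sum_neg_one_pow_card_indep_fiber hedge hτD hτI

lemma natAbs_sum_neg_one_pow_card_indep_le
    (hedge : ∀ u v : V, u ∉ D → v ∉ D → ¬ G.Adj u v) :
    (∑ σ ∈ univ.filter G.IsIndep, (-1 : ℤ) ^ #σ).natAbs
      ≤ #(univ.filter fun τ => τ ⊆ D ∧ G.IsIndep τ ∧ ∀ w, w ∉ D → ∃ v ∈ τ, G.Adj v w) := by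
  have hdominating : univ.filter (fun τ => τ ⊆ D ∧ G.IsIndep τ ∧ ∀ w, w ∉ D → ∃ v ∈ τ, G.Adj v w)
      = {τ ∈ univ.filter (fun τ => τ ⊆ D ∧ G.IsIndep τ) | G.undominatedOutside D τ = ∅} := by
    simp only [filter_filter, undominatedOutside_eq_empty_iff, and_assoc]
  simp only [sum_neg_one_pow_card_indep_eq hedge, sum_powerset_neg_one_pow_card, mul_ite,
    mul_one, mul_zero, ← sum_filter, hdominating]
  exact Int.natAbs_sum_neg_one_pow_le_card _ _

end SimpleGraph

/-- Let `D ⊆ V(G)` be such that `G \ D` has no edges, and for an independent set `τ` of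
`G[D]` let `S(τ) = (V(G) \ D) \ ⋃_{v ∈ τ} N(v)`.  Then (i) the independent sets `σ` of
`G` with `σ ∩ D = τ` are in bijection with the subsets of `S(τ)` (the independent sets
of the graph obtained by deleting `D` and all neighbors of `τ`); (ii)
`∑_{σ ∈ Ind(G)} (-1)^{|σ|} = ∑_{τ ∈ Ind(G[D])} (-1)^{|τ|} ∑_{ρ ⊆ S(τ)} (-1)^{|ρ|}`;
(iii) hence `|∑_{σ ∈ Ind(G)} (-1)^{|σ|}|` is at most the number of `τ ∈ Ind(G[D])`
with `⋃_{v ∈ τ} N(v) ⊇ V(G) \ D`. -/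
theorem cohomological_method {V : Type*} [Fintype V] [DecidableEq V] (G : SimpleGraph V)
    (D : Finset V) (hedge : ∀ u v : V, u ∉ D → v ∉ D → ¬ G.Adj u v) :
    (∀ τ : Finset V, τ ⊆ D → G.IsIndep τ →
        Nonempty ({σ : Finset V // G.IsIndep σ ∧ σ ∩ D = τ} ≃
          {ρ : Finset V // ρ ⊆ Finset.univ.filter
            (fun w => w ∉ D ∧ ∀ v ∈ τ, ¬ G.Adj v w)}))
    ∧ (∑ s ∈ Finset.univ.filter G.IsIndep, (-1 : ℤ) ^ s.card
        = ∑ τ ∈ Finset.univ.filter (fun τ => τ ⊆ D ∧ G.IsIndep τ),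
            (-1 : ℤ) ^ τ.card *
              ∑ ρ ∈ (Finset.univ.filter
                  (fun w => w ∉ D ∧ ∀ v ∈ τ, ¬ G.Adj v w)).powerset,
                (-1 : ℤ) ^ ρ.card)
    ∧ (∑ s ∈ Finset.univ.filter G.IsIndep, (-1 : ℤ) ^ s.card).natAbs
        ≤ (Finset.univ.filter (fun τ => τ ⊆ D ∧ G.IsIndep τ ∧
            ∀ w : V, w ∉ D → ∃ v ∈ τ, G.Adj v w)).card :=
  ⟨fun _ hτD hτ => ⟨SimpleGraph.indepFiberEquiv hedge hτD hτ⟩,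
    SimpleGraph.sum_neg_one_pow_card_indep_eq hedge,
    SimpleGraph.natAbs_sum_neg_one_pow_card_indep_le hedge⟩
end
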